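/- Let Ω be a bounded open subset of ℝ^N (N ≥ 3) and let p₁, p₂, q : closure(Ω) → ℝ be continuous functions satisfying 1 < p₂(x) < q⁻ ≤ q⁺ < p₁(x) < N for all x ∈ closure(Ω), where q⁻ = min_{closure(Ω)} q and q⁺ = max_{closure(Ω)} q. Then there exists a constant λ₁ > 0 such that for every function u : ℝ^N → ℝ of class C¹ with compact support contained in Ω, ∫_Ω (1/p₁(x))|Du(x)|^{p₁(x)} dx + ∫_Ω (1/p₂(x))|Du(x)|^{p₂(x)} dx ≥ λ₁ ∫_Ω (1/q(x))|u(x)|^{q(x)} dx. -/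

import Mathlib

open MeasureTheory ENNReal

/-- `J(u) = ∫_Ω (1/p₁(x))|Du|^{p₁(x)} dx + ∫_Ω (1/p₂(x))|Du|^{p₂(x)} dx`. -/
noncomputable def Jfun (N : ℕ) (Ω : Set (EuclideanSpace ℝ (Fin N)))
    (p₁ p₂ : EuclideanSpace ℝ (Fin N) → ℝ) (u : EuclideanSpace ℝ (Fin N) → ℝ) : ℝ≥0∞ :=
  (∫⁻ x in Ω, ENNReal.ofReal ((1 / p₁ x) * ‖fderiv ℝ u x‖ ^ p₁ x)) +
    ∫⁻ x in Ω, ENNReal.ofReal ((1 / p₂ x) * ‖fderiv ℝ u x‖ ^ p₂ x)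

/-- `I(u) = ∫_Ω (1/q(x))|u|^{q(x)} dx`. -/
noncomputable def Ifun (N : ℕ) (Ω : Set (EuclideanSpace ℝ (Fin N)))
    (q : EuclideanSpace ℝ (Fin N) → ℝ) (u : EuclideanSpace ℝ (Fin N) → ℝ) : ℝ≥0∞ :=
  ∫⁻ x in Ω, ENNReal.ofReal ((1 / q x) * |u x| ^ q x)

/-!
Pointwise, `t^{q(x)}/q(x) ≤ (t^{q⁻} + t^{q⁺})/q⁻`, and, according as `t = |Du(x)| ≥ 1` or `< 1`,
`t^{q⁻} + t^{q⁺} ≤ 2N t^{p₁(x)}/p₁(x)` or `≤ 2N t^{p₂(x)}/p₂(x)`, because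
`p₂(x) < q⁻ ≤ q⁺ < p₁(x) < N`. The two estimates are bridged by the Sobolev–Poincaré inequality
`∫ |u|^r ≤ C_r ∫ |Du|^r` for the two constant exponents `r = q⁻, q⁺ ∈ (1, N)`, which holds on
the bounded set `Ω` by the Gagliardo–Nirenberg–Sobolev inequality.
-/

open NNReal Set Module

section RpowBounds

variable {t a b c p n : ℝ}

theorem rpow_le_rpow_add_rpow (ht : 0 ≤ t) (ha : 0 < a) (hac : a ≤ c) (hcb : c ≤ b) :
    t ^ c ≤ t ^ a + t ^ b := by
  rcases le_total t 1 with h | h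
  · have := Real.rpow_le_rpow_of_exponent_ge' ht h ha.le hac
    linarith [Real.rpow_nonneg ht b]
  · have := Real.rpow_le_rpow_of_exponent_le h hcb
    linarith [Real.rpow_nonneg ht a]

theorem one_div_mul_rpow_le (ht : 0 ≤ t) (ha : 0 < a) (hac : a ≤ c) (hcb : c ≤ b) :
    1 / c * t ^ c ≤ 1 / a * (t ^ a + t ^ b) :=
  mul_le_mul (one_div_le_one_div_of_le ha hac) (rpow_le_rpow_add_rpow ht ha hac hcb)
    (by positivity) (by positivity)

theorem add_le_two_mul_mul_one_div_mul {x y z : ℝ} (hx : x ≤ z) (hy : y ≤ z) (hz : 0 ≤ z)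
    (hp : 0 < p) (hpn : p ≤ n) : x + y ≤ 2 * n * (1 / p * z) := by
  have : z ≤ n * (1 / p * z) := by
    rw [← mul_assoc, mul_one_div]
    exact le_mul_of_one_le_left hz ((one_le_div hp).2 hpn)
  linarith

theorem rpow_add_rpow_le_of_one_le (ht : 1 ≤ t) (hap : a ≤ p) (hbp : b ≤ p) (hp : 0 < p)
    (hpn : p ≤ n) : t ^ a + t ^ b ≤ 2 * n * (1 / p * t ^ p) :=
  add_le_two_mul_mul_one_div_mul (Real.rpow_le_rpow_of_exponent_le ht hap)
    (Real.rpow_le_rpow_of_exponent_le ht hbp) (Real.rpow_nonneg (by linarith) p) hp hpn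

theorem rpow_add_rpow_le_of_le_one (ht₀ : 0 ≤ t) (ht : t ≤ 1) (hpa : p ≤ a) (hpb : p ≤ b)
    (hp : 0 < p) (hpn : p ≤ n) : t ^ a + t ^ b ≤ 2 * n * (1 / p * t ^ p) :=
  add_le_two_mul_mul_one_div_mul (Real.rpow_le_rpow_of_exponent_ge' ht₀ ht hp.le hpa)
    (Real.rpow_le_rpow_of_exponent_ge' ht₀ ht hp.le hpb) (Real.rpow_nonneg ht₀ p) hp hpn

end RpowBounds

theorem ofReal_norm_rpow_add_norm_rpow {F : Type*} [NormedAddCommGroup F] (v : F) {a b : ℝ}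
    (ha : 0 ≤ a) (hb : 0 ≤ b) :
    ENNReal.ofReal (‖v‖ ^ a + ‖v‖ ^ b) = ‖v‖ₑ ^ a + ‖v‖ₑ ^ b := by
  rw [ofReal_add (by positivity) (by positivity), ← ofReal_rpow_of_nonneg (norm_nonneg v) ha,
    ← ofReal_rpow_of_nonneg (norm_nonneg v) hb, ofReal_norm]

theorem enorm_rpow_add_enorm_rpow_le_ofReal_mul {F : Type*} [NormedAddCommGroup F] {v : F}
    {a b c d : ℝ} (ha : 0 ≤ a) (hb : 0 ≤ b) (hd : 0 ≤ d) (h : ‖v‖ ^ a + ‖v‖ ^ b ≤ c * d) :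
    ‖v‖ₑ ^ a + ‖v‖ₑ ^ b ≤ ENNReal.ofReal c * ENNReal.ofReal d := by
  rw [← ofReal_norm_rpow_add_norm_rpow v ha hb, ← ofReal_mul' hd]
  exact ofReal_le_ofReal h

theorem MeasureTheory.lintegral_le_add_of_indicator_le {α : Type*} [MeasurableSpace α]
    {μ : Measure α} {g f₁ f₂ : α → ℝ≥0∞} {S : Set α} (hS : MeasurableSet S)
    (h₁ : S.indicator g ≤ f₁) (h₂ : Sᶜ.indicator g ≤ f₂) :
    ∫⁻ x, g x ∂μ ≤ ∫⁻ x, f₁ x ∂μ + ∫⁻ x, f₂ x ∂μ := by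
  rw [← lintegral_add_compl g hS, ← lintegral_indicator hS, ← lintegral_indicator hS.compl]
  exact add_le_add (lintegral_mono h₁) (lintegral_mono h₂)

theorem ENNReal.exists_pos_ofReal_mul_le_of_le_mul {K : ℝ≥0∞} (hK : K ≠ ∞) :
    ∃ l : ℝ, 0 < l ∧ ∀ x y : ℝ≥0∞, x ≤ K * y → ENNReal.ofReal l * x ≤ y := by
  refine ⟨(K.toReal + 1)⁻¹, by positivity, fun x y hxy => ?_⟩
  have hlK : ENNReal.ofReal (K.toReal + 1)⁻¹ * K ≤ 1 := by
    rw [← ofReal_toReal hK, ← ofReal_mul (by positivity), ofReal_le_one,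
      toReal_ofReal toReal_nonneg, inv_mul_le_iff₀ (by positivity)]
    linarith
  calc ENNReal.ofReal (K.toReal + 1)⁻¹ * x ≤ ENNReal.ofReal (K.toReal + 1)⁻¹ * K * y := by
        rw [mul_assoc]; gcongr
    _ ≤ y := by simpa using mul_le_mul_left hlK y

section Poincare

variable {E F : Type*} [NormedAddCommGroup E] [NormedSpace ℝ E] [MeasurableSpace E]
  [BorelSpace E] [FiniteDimensional ℝ E] (μ : Measure E) [μ.IsAddHaarMeasure]
  [NormedAddCommGroup F] [NormedSpace ℝ F] [FiniteDimensional ℝ F]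

theorem exists_lintegral_rpow_le_setLIntegral_fderiv_rpow {s : Set E}
    (hs : Bornology.IsBounded s) {p : ℝ} (hp : 1 ≤ p) (hpE : p < finrank ℝ E) :
    ∃ C : ℝ≥0, ∀ u : E → F, ContDiff ℝ 1 u → tsupport u ⊆ s →
      ∫⁻ x, ‖u x‖ₑ ^ p ∂μ ≤ C * ∫⁻ x in s, ‖fderiv ℝ u x‖ₑ ^ p ∂μ := by
  lift p to ℝ≥0 using by linarith
  have hp₀ : (0 : ℝ) < p := by linarith
  have hp0 : p ≠ 0 := by exact_mod_cast hp₀.ne'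
  refine ⟨eLpNormLESNormFDerivOfLeConst F μ s p p ^ (p : ℝ), fun u hu hus => ?_⟩
  have hsupp : (fun x => ‖fderiv ℝ u x‖ₑ ^ (p : ℝ)).support ⊆ s := fun x hx => by
    by_contra hxs
    rw [Function.mem_support, fderiv_of_notMem_tsupport ℝ (fun h => hxs (hus h))] at hx
    simp [enorm_eq_nnnorm, hp₀] at hx
  rw [setLIntegral_eq_of_support_subset hsupp, ← eLpNorm_nnreal_pow_eq_lintegral hp0,
    ← eLpNorm_nnreal_pow_eq_lintegral hp0, coe_rpow_of_nonneg _ hp₀.le,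
    ← mul_rpow_of_nonneg _ _ hp₀.le]
  gcongr
  exact eLpNorm_le_eLpNorm_fderiv μ hu ((subset_tsupport u).trans hus) (by exact_mod_cast hp)
    (by exact_mod_cast hpE) hs

end Poincare

section Functionals

variable {N : ℕ} {Ω : Set (EuclideanSpace ℝ (Fin N))} {u : EuclideanSpace ℝ (Fin N) → ℝ}

theorem Ifun_le_ofReal_mul_lintegral_add {q : EuclideanSpace ℝ (Fin N) → ℝ} {a b : ℝ}
    (ha : 0 < a) (hq : ∀ x ∈ Ω, a ≤ q x ∧ q x ≤ b) (hu : Measurable u) (huΩ : tsupport u ⊆ Ω) :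
    Ifun N Ω q u ≤ ENNReal.ofReal (1 / a) * ((∫⁻ x, ‖u x‖ₑ ^ a) + ∫⁻ x, ‖u x‖ₑ ^ b) := by
  have hpt : ∀ x, ENNReal.ofReal (1 / q x * |u x| ^ q x) ≤
      ENNReal.ofReal (1 / a) * (‖u x‖ₑ ^ a + ‖u x‖ₑ ^ b) := fun x => by
    by_cases hx : x ∈ Ω
    · obtain ⟨hax, hxb⟩ := hq x hx
      rw [← ofReal_norm_rpow_add_norm_rpow _ ha.le (by linarith), ← ofReal_mul (by positivity),
        ← Real.norm_eq_abs]
      exact ofReal_le_ofReal (one_div_mul_rpow_le (norm_nonneg _) ha hax hxb)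
    -- `Ω` need not be measurable, so the bound is needed off `Ω` too, where `u x = 0`; there the
    -- left side is `0` even if `q x = 0`, since then `1 / q x = 0`.
    · have hqx : 1 / q x * |u x| ^ q x ≤ 0 := by
        rcases eq_or_ne (q x) 0 with h | h <;>
          simp [h, image_eq_zero_of_notMem_tsupport (fun h => hx (huΩ h))]
      rw [ofReal_eq_zero.2 hqx]
      exact zero_le
  calc Ifun N Ω q u ≤ ∫⁻ x in Ω, ENNReal.ofReal (1 / a) * (‖u x‖ₑ ^ a + ‖u x‖ₑ ^ b) :=
        lintegral_mono hpt
    _ ≤ ∫⁻ x, ENNReal.ofReal (1 / a) * (‖u x‖ₑ ^ a + ‖u x‖ₑ ^ b) :=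
        setLIntegral_le_lintegral _ _
    _ = _ := by
      rw [lintegral_const_mul' _ _ ofReal_ne_top,
        lintegral_add_left (hu.enorm.pow_const a)]

theorem lintegral_fderiv_rpow_add_le_Jfun {p₁ p₂ : EuclideanSpace ℝ (Fin N) → ℝ} {a b n : ℝ}
    (ha : 0 < a) (hab : a ≤ b) (hp : ∀ x ∈ Ω, 0 < p₂ x ∧ p₂ x ≤ a ∧ b ≤ p₁ x ∧ p₁ x ≤ n)
    (huΩ : tsupport u ⊆ Ω) :
    (∫⁻ x in Ω, ‖fderiv ℝ u x‖ₑ ^ a) + ∫⁻ x in Ω, ‖fderiv ℝ u x‖ₑ ^ b ≤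
      ENNReal.ofReal (2 * n) * Jfun N Ω p₁ p₂ u := by
  have hΩ : ∀ x, fderiv ℝ u x ≠ 0 → x ∈ Ω := fun x hx => huΩ (support_fderiv_subset ℝ hx)
  set S := {x | 1 ≤ ‖fderiv ℝ u x‖}
  have hS : MeasurableSet S := measurableSet_le measurable_const (measurable_fderiv ℝ u).norm
  rw [← lintegral_add_left ((measurable_fderiv ℝ u).enorm.pow_const a), Jfun, mul_add,
    ← lintegral_const_mul' _ _ ofReal_ne_top, ← lintegral_const_mul' _ _ ofReal_ne_top]
  refine lintegral_le_add_of_indicator_le hS (fun x => ?_) (fun x => ?_)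
  · by_cases hxS : x ∈ S
    · have hx : x ∈ Ω := hΩ x fun h => by norm_num [S, h] at hxS
      obtain ⟨hp₂, -, hbp, hpn⟩ := hp x hx
      rw [indicator_of_mem hxS]
      exact enorm_rpow_add_enorm_rpow_le_ofReal_mul ha.le (by linarith)
        (mul_nonneg (one_div_nonneg.2 (by linarith)) (by positivity))
        (rpow_add_rpow_le_of_one_le hxS (by linarith) hbp (by linarith) hpn)
    · simp [indicator_of_notMem hxS]
  · by_cases hxS : x ∈ Sᶜ
    · rw [indicator_of_mem hxS]
      by_cases hx : x ∈ Ω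
      · obtain ⟨hp₂, hpa, hbp, hpn⟩ := hp x hx
        exact enorm_rpow_add_enorm_rpow_le_ofReal_mul ha.le (by linarith)
          (mul_nonneg (one_div_nonneg.2 hp₂.le) (by positivity))
          (rpow_add_rpow_le_of_le_one (norm_nonneg _) (le_of_lt (not_le.1 hxS)) hpa
            (by linarith) hp₂ (by linarith))
      · have h0 : fderiv ℝ u x = 0 := not_not.1 fun h => hx (hΩ x h)
        simp [h0, enorm_eq_nnnorm, ha, ha.trans_le hab]
    · simp [indicator_of_notMem hxS]

theorem exists_Ifun_le_mul_Jfun (hΩ : Bornology.IsBounded Ω)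
    {p₁ p₂ q : EuclideanSpace ℝ (Fin N) → ℝ} {a b : ℝ} (ha : 1 < a) (hab : a ≤ b) (hbN : b < N)
    (hq : ∀ x ∈ Ω, a ≤ q x ∧ q x ≤ b)
    (hp : ∀ x ∈ Ω, 0 < p₂ x ∧ p₂ x ≤ a ∧ b ≤ p₁ x ∧ p₁ x ≤ N) :
    ∃ K : ℝ≥0∞, K ≠ ∞ ∧ ∀ u : EuclideanSpace ℝ (Fin N) → ℝ, ContDiff ℝ 1 u → tsupport u ⊆ Ω →
      Ifun N Ω q u ≤ K * Jfun N Ω p₁ p₂ u := by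
  have hdim : (finrank ℝ (EuclideanSpace ℝ (Fin N)) : ℝ) = N := by simp
  obtain ⟨C₁, hC₁⟩ := exists_lintegral_rpow_le_setLIntegral_fderiv_rpow volume (F := ℝ) hΩ
    ha.le (by linarith)
  obtain ⟨C₂, hC₂⟩ := exists_lintegral_rpow_le_setLIntegral_fderiv_rpow volume (F := ℝ) hΩ
    (ha.le.trans hab) (by linarith)
  refine ⟨ENNReal.ofReal (1 / a) * ((C₁ + C₂) * ENNReal.ofReal (2 * N)), by finiteness,
    fun u hu huΩ => ?_⟩
  set G : ℝ → ℝ≥0∞ := fun r => ∫⁻ x in Ω, ‖fderiv ℝ u x‖ₑ ^ r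
  calc Ifun N Ω q u ≤ ENNReal.ofReal (1 / a) * ((∫⁻ x, ‖u x‖ₑ ^ a) + ∫⁻ x, ‖u x‖ₑ ^ b) :=
        Ifun_le_ofReal_mul_lintegral_add (by linarith) hq hu.continuous.measurable huΩ
    _ ≤ ENNReal.ofReal (1 / a) * (C₁ * G a + C₂ * G b) := by
        gcongr
        exacts [hC₁ u hu huΩ, hC₂ u hu huΩ]
    _ ≤ ENNReal.ofReal (1 / a) * ((C₁ + C₂) * (G a + G b)) := by
        gcongr _ * ?_
        rw [mul_add]
        gcongr
        exacts [le_self_add, le_add_self]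
    _ ≤ ENNReal.ofReal (1 / a) * ((C₁ + C₂) * (ENNReal.ofReal (2 * N) * Jfun N Ω p₁ p₂ u)) := by
        gcongr
        exact lintegral_fderiv_rpow_add_le_Jfun (by linarith) hab hp huΩ
    _ = _ := by ring

end Functionals

theorem stmt7_general (N : ℕ) (Ω : Set (EuclideanSpace ℝ (Fin N)))
    (hΩb : Bornology.IsBounded Ω)
    (p₁ p₂ q : EuclideanSpace ℝ (Fin N) → ℝ)
    (qm qp : ℝ) (hqm : IsLeast (q '' closure Ω) qm)
    (hqp : IsGreatest (q '' closure Ω) qp)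
    (hcond : ∀ x ∈ closure Ω, 1 < p₂ x ∧ p₂ x < qm ∧ qp < p₁ x ∧ p₁ x < N) :
    ∃ l : ℝ, 0 < l ∧ ∀ u : EuclideanSpace ℝ (Fin N) → ℝ,
      ContDiff ℝ 1 u → HasCompactSupport u → tsupport u ⊆ Ω →
      ENNReal.ofReal l * Ifun N Ω q u ≤ Jfun N Ω p₁ p₂ u := by
  obtain ⟨x₀, hx₀, -⟩ := hqm.1
  obtain ⟨hp₂, hp₂qm, hqpp₁, hp₁N⟩ := hcond x₀ hx₀
  have hq : ∀ x ∈ Ω, qm ≤ q x ∧ q x ≤ qp := fun x hx =>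
    ⟨hqm.2 (mem_image_of_mem q (subset_closure hx)), hqp.2 (mem_image_of_mem q (subset_closure hx))⟩
  have hp : ∀ x ∈ Ω, 0 < p₂ x ∧ p₂ x ≤ qm ∧ qp ≤ p₁ x ∧ p₁ x ≤ N := fun x hx => by
    obtain ⟨h₁, h₂, h₃, h₄⟩ := hcond x (subset_closure hx)
    exact ⟨by linarith, h₂.le, h₃.le, h₄.le⟩
  obtain ⟨K, hK, hIJ⟩ :=
    exists_Ifun_le_mul_Jfun hΩb (by linarith) (hqm.2 hqp.1) (by linarith) hq hp
  obtain ⟨l, hl, hle⟩ := ENNReal.exists_pos_ofReal_mul_le_of_le_mul hK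
  exact ⟨l, hl, fun u hu _ huΩ => hle _ _ (hIJ u hu huΩ)⟩

/-- If `Ω ⊆ ℝ^N` (`N ≥ 3`) is bounded open and `p₁, p₂, q` are continuous on
    `closure Ω` with `1 < p₂(x) < q⁻ ≤ q⁺ < p₁(x) < N`, then there is `λ₁ > 0` such
    that `J(u) ≥ λ₁ I(u)` for every `C¹` function `u` with compact support in `Ω`. -/
theorem stmt7 (N : ℕ) (hN : 3 ≤ N) (Ω : Set (EuclideanSpace ℝ (Fin N)))
    (hΩo : IsOpen Ω) (hΩb : Bornology.IsBounded Ω)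
    (p₁ p₂ q : EuclideanSpace ℝ (Fin N) → ℝ)
    (hp₁ : ContinuousOn p₁ (closure Ω)) (hp₂ : ContinuousOn p₂ (closure Ω))
    (hq : ContinuousOn q (closure Ω))
    (qm qp : ℝ) (hqm : IsLeast (q '' closure Ω) qm)
    (hqp : IsGreatest (q '' closure Ω) qp)
    (hcond : ∀ x ∈ closure Ω, 1 < p₂ x ∧ p₂ x < qm ∧ qp < p₁ x ∧ p₁ x < N) :
    ∃ l : ℝ, 0 < l ∧ ∀ u : EuclideanSpace ℝ (Fin N) → ℝ,
      ContDiff ℝ 1 u → HasCompactSupport u → tsupport u ⊆ Ω →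
      ENNReal.ofReal l * Ifun N Ω q u ≤ Jfun N Ω p₁ p₂ u :=
  stmt7_general N Ω hΩb p₁ p₂ q qm qp hqm hqp hcond
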